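/- For any finite ranked poset P and any antichain A of P, the composition row^{-1} ∘ Rvac preserves support: supp((row^{-1} ∘ Rvac)(A)) = supp(A), where supp(A) is the set of minimal elements of P lying below some element of A. -/

import Mathlib

open scoped Classical

variable {α : Type*}

noncomputable def toggle [PartialOrder α] (p : α) (A : Finset α) : Finset α :=
  if p ∈ A then A.erase p
  else if IsAntichain (· ≤ ·) (↑(insert p A) : Set α) then insert p A
  else A

noncomputable def rowmotion [Fintype α] [PartialOrder α] (A : Finset α) : Finset α :=
  Finset.univ.filter
    (fun x => (∀ y ∈ A, ¬ x ≤ y) ∧ ∀ z : α, (∀ y ∈ A, ¬ z ≤ y) → z ≤ x → z = x)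

noncomputable def rankToggle [Fintype α] [PartialOrder α] (rk : α → ℕ) (i : ℕ)
    (A : Finset α) : Finset α :=
  (Finset.univ.filter (fun p => rk p = i)).toList.foldr toggle A

noncomputable def rvac [Fintype α] [PartialOrder α] (rk : α → ℕ) (N : ℕ)
    (A : Finset α) : Finset α :=
  (List.range (N + 1)).foldl
    (fun B k => (List.range' k (N + 1 - k)).foldl (fun C j => rankToggle rk j C) B) A

def IsRankFunction [PartialOrder α] (rk : α → ℕ) : Prop :=
  (∀ p : α, (∀ q : α, ¬ q < p) → rk p = 0) ∧ ∀ x y : α, x ⋖ y → rk y = rk x + 1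

/-!
The first toggle performed by `Rvac` is the one at rank `0`, and rank `0` consists exactly of the
minimal elements; all later toggles are at positive ranks and leave minimal elements alone.
Toggling a minimal `p` puts it into the antichain iff nothing above `p` is there yet, and toggling
the other minimal elements first does not change what lies above `p`. Hence a minimal `p` lies in
`Rvac A` iff `p ∉ supp A`, while a minimal `p` lies in `row B` iff `p ∉ supp B`.
-/

section

variable [PartialOrder α] {p q : α} {A : Finset α}

lemma mem_toggle_of_ne (h : p ≠ q) : p ∈ toggle q A ↔ p ∈ A := by
  unfold toggle
  split_ifs
  · simp [h]
  · simp [h]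
  · rfl

lemma isAntichain_toggle (hA : IsAntichain (· ≤ ·) (A : Set α)) (q : α) :
    IsAntichain (· ≤ ·) (toggle q A : Set α) := by
  unfold toggle
  split_ifs with _ hins
  · exact hA.subset (by simp)
  · exact hins
  · exact hA

lemma mem_toggle_self_iff (hp : IsMin p) (hA : IsAntichain (· ≤ ·) (A : Set α)) :
    p ∈ toggle p A ↔ ¬∃ a ∈ A, p ≤ a := by
  unfold toggle
  by_cases hpA : p ∈ A
  · rw [if_pos hpA]
    exact iff_of_false (Finset.notMem_erase p A) (not_not_intro ⟨p, hpA, le_rfl⟩)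
  rw [if_neg hpA]
  by_cases hcov : ∃ a ∈ A, p ≤ a
  · obtain ⟨a, haA, hpa⟩ := hcov
    have hins : ¬IsAntichain (· ≤ ·) (↑(insert p A) : Set α) := fun h =>
      h (by simp) (by simp [haA]) (ne_of_mem_of_not_mem haA hpA).symm hpa
    rw [if_neg hins]
    exact iff_of_false hpA (not_not_intro ⟨a, haA, hpa⟩)
  · have hins : IsAntichain (· ≤ ·) (↑(insert p A) : Set α) := by
      rw [Finset.coe_insert]
      refine hA.insert (fun a haA hpa hap => ?_) (fun a haA _ hpa => hcov ⟨a, haA, hpa⟩)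
      exact hpa (hp.eq_of_le hap).symm
    rw [if_pos hins]
    exact iff_of_true (Finset.mem_insert_self p A) hcov

lemma exists_le_toggle_iff (hpq : p ≠ q) (hq : IsMin q) :
    (∃ a ∈ toggle q A, p ≤ a) ↔ ∃ a ∈ A, p ≤ a :=
  exists_congr fun _ => and_congr_left fun hpa =>
    mem_toggle_of_ne fun haq => hpq (hq.eq_of_le (haq ▸ hpa))

lemma isAntichain_foldr_toggle (L : List α) (hA : IsAntichain (· ≤ ·) (A : Set α)) :
    IsAntichain (· ≤ ·) (↑(L.foldr toggle A) : Set α) := by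
  induction L with
  | nil => exact hA
  | cons q L ih => exact isAntichain_toggle ih q

lemma mem_foldr_toggle_of_notMem {L : List α} (hp : p ∉ L) :
    p ∈ L.foldr toggle A ↔ p ∈ A := by
  induction L with
  | nil => rfl
  | cons q L ih =>
    rw [List.mem_cons, not_or] at hp
    rw [List.foldr_cons, mem_toggle_of_ne hp.1, ih hp.2]

lemma exists_le_foldr_toggle_iff {L : List α} (hL : ∀ q ∈ L, IsMin q) (hp : p ∉ L) :
    (∃ a ∈ L.foldr toggle A, p ≤ a) ↔ ∃ a ∈ A, p ≤ a := by
  induction L with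
  | nil => rfl
  | cons q L ih =>
    rw [List.mem_cons, not_or] at hp
    rw [List.foldr_cons, exists_le_toggle_iff hp.1 (hL q List.mem_cons_self),
      ih (fun r hr => hL r (List.mem_cons_of_mem q hr)) hp.2]

lemma mem_foldr_toggle_iff_of_isMin {L : List α} (hL : ∀ q ∈ L, IsMin q) (hnd : L.Nodup)
    (hA : IsAntichain (· ≤ ·) (A : Set α)) (hp : p ∈ L) :
    p ∈ L.foldr toggle A ↔ ¬∃ a ∈ A, p ≤ a := by
  induction L with
  | nil => cases hp
  | cons q L ih =>
    obtain ⟨hqL, hnd⟩ := List.nodup_cons.mp hnd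
    have hL' : ∀ r ∈ L, IsMin r := fun r hr => hL r (List.mem_cons_of_mem q hr)
    rw [List.foldr_cons]
    rcases List.mem_cons.mp hp with rfl | hpL
    · rw [mem_toggle_self_iff (hL p List.mem_cons_self) (isAntichain_foldr_toggle L hA),
        exists_le_foldr_toggle_iff hL' hqL]
    · rw [mem_toggle_of_ne (ne_of_mem_of_not_mem hpL hqL), ih hL' hnd hpL]

end

lemma IsRankFunction.rank_eq_zero_iff [PartialOrder α] [IsStronglyCoatomic α] {rk : α → ℕ}
    (hrk : IsRankFunction rk) {p : α} : rk p = 0 ↔ IsMin p := by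
  refine ⟨fun h0 => isMin_iff_forall_not_lt.2 fun q hqp => ?_,
    fun hp => hrk.1 p (isMin_iff_forall_not_lt.1 hp)⟩
  obtain ⟨m, -, hmp⟩ := exists_le_covBy_of_lt hqp
  have := hrk.2 m p hmp
  omega

section

variable [Fintype α] [PartialOrder α] {rk : α → ℕ} {p : α}

lemma mem_rankToggle_of_ne {i : ℕ} (h : rk p ≠ i) (A : Finset α) :
    p ∈ rankToggle rk i A ↔ p ∈ A :=
  mem_foldr_toggle_of_notMem (by simpa using h)

lemma mem_foldl_rankToggle_of_forall_ne {l : List ℕ} (h : ∀ j ∈ l, j ≠ rk p) (A : Finset α) :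
    p ∈ l.foldl (fun C j => rankToggle rk j C) A ↔ p ∈ A := by
  induction l generalizing A with
  | nil => rfl
  | cons j l ih =>
    rw [List.foldl_cons, ih (fun k hk => h k (List.mem_cons_of_mem j hk)),
      mem_rankToggle_of_ne (h j List.mem_cons_self).symm]

lemma IsRankFunction.mem_rankToggle_zero (hrk : IsRankFunction rk) {A : Finset α}
    (hA : IsAntichain (· ≤ ·) (A : Set α)) (hp : rk p = 0) :
    p ∈ rankToggle rk 0 A ↔ ¬∃ a ∈ A, p ≤ a :=
  mem_foldr_toggle_iff_of_isMin (fun q hq => hrk.rank_eq_zero_iff.1 (by simpa using hq))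
    (Finset.nodup_toList _) hA (by simpa using hp)

lemma mem_rvac_iff_mem_rankToggle_zero (hp : rk p = 0) (N : ℕ) (A : Finset α) :
    p ∈ rvac rk N A ↔ p ∈ rankToggle rk 0 A := by
  unfold rvac
  rw [List.range_succ_eq_map, List.foldl_cons, Nat.sub_zero, List.range'_succ, List.foldl_cons,
    ← List.foldl_flatMap, mem_foldl_rankToggle_of_forall_ne, mem_foldl_rankToggle_of_forall_ne]
  · intro j hj
    have := (List.mem_range'_1.mp hj).1
    omega
  · intro j hj
    simp only [List.mem_flatMap, List.mem_map, List.mem_range'_1] at hj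
    omega

lemma mem_rowmotion_iff_of_isMin {B : Finset α} (hp : IsMin p) :
    p ∈ rowmotion B ↔ ¬∃ b ∈ B, p ≤ b := by
  simp only [rowmotion, Finset.mem_filter, Finset.mem_univ, true_and, not_exists, not_and]
  exact and_iff_left fun z _ hzp => hp.eq_of_le hzp

end

theorem rvac_row_inv_supp_general [Fintype α] [PartialOrder α] (rk : α → ℕ)
    (hrk : IsRankFunction rk) (A B : Finset α)
    (hA : IsAntichain (· ≤ ·) (↑A : Set α))
    (hrow : rowmotion B = rvac rk (Finset.univ.sup rk) A) :
    {p : α | (∀ q : α, ¬ q < p) ∧ ∃ a ∈ B, p ≤ a} =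
      {p : α | (∀ q : α, ¬ q < p) ∧ ∃ a ∈ A, p ≤ a} := by
  ext p
  refine and_congr_right fun hmin => ?_
  have hp0 : rk p = 0 := hrk.1 p hmin
  have h := mem_rowmotion_iff_of_isMin (B := B) (isMin_iff_forall_not_lt.2 hmin)
  rw [hrow, mem_rvac_iff_mem_rankToggle_zero hp0, hrk.mem_rankToggle_zero hA hp0] at h
  exact not_iff_not.mp h.symm

/-- `supp((row⁻¹ ∘ Rvac)(A)) = supp(A)`: if `B` is the antichain with
`row(B) = Rvac(A)`, then `supp B = supp A`. -/
theorem rvac_row_inv_supp [Fintype α] [PartialOrder α] (rk : α → ℕ)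
    (hrk : IsRankFunction rk) (A B : Finset α)
    (hA : IsAntichain (· ≤ ·) (↑A : Set α))
    (hB : IsAntichain (· ≤ ·) (↑B : Set α))
    (hrow : rowmotion B = rvac rk (Finset.univ.sup rk) A) :
    {p : α | (∀ q : α, ¬ q < p) ∧ ∃ a ∈ B, p ≤ a} =
      {p : α | (∀ q : α, ¬ q < p) ∧ ∃ a ∈ A, p ≤ a} :=
  rvac_row_inv_supp_general rk hrk A B hA hrow
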